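/- Let n ≥ 2 and let X ⊆ ℝ^n with the 1-norm metric be a finite set with |X| = k ≤ 2n. For any real coefficients α_x (x ∈ X) with ∑ α_x = 1, ∑_{x,y ∈ X} α_x α_y ‖x - y‖₁ ≤ min(k/4, n/2 - 1/4) · D(X). -/

import Mathlib

/-!
With nonnegative weights, every off-diagonal distance is at most `D(X)`, so the sum is at most
`(1 - ∑ α_x²) D(X)`, and Cauchy–Schwarz gives `∑ α_x² ≥ 1 / k`.

If some weight `α_z` is nonpositive, split the `ℓ¹` distance into coordinates. On the line, the
layer-cake formula `|r - s| = ∫ (1_{u < r} - 1_{u < s})² du` reduces the weighted sum to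
`0/1`-valued configurations, where it equals `2 S (1 - S)` with `S = ∑ α_x 1_{u < t_x}`. That is
at most `1/2`, and at most `0` unless `u` separates two points of `X \ {z}`. So four times the
sum in one coordinate is at most twice the range of that coordinate on `X \ {z}`, which is at most
the length of a closed tour through the `k - 1` points of `X \ {z}`. Summing over coordinates
bounds four times the whole sum by `(k - 1) D(X)`.
-/

open MeasureTheory Set Finset

lemma sum_sum_mul_mul_dist_le {E : Type*} [PseudoMetricSpace E] (X : Finset E)
    {α : E → ℝ} (hα : ∀ x ∈ X, 0 ≤ α x) :
    ∑ x ∈ X, ∑ y ∈ X, α x * α y * dist x y ≤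
      ((∑ x ∈ X, α x) ^ 2 - ∑ x ∈ X, α x ^ 2) * Metric.diam (X : Set E) := by
  classical
  have hrow : ∀ x ∈ X, ∑ y ∈ X, α x * α y * dist x y ≤
      (α x * ∑ y ∈ X, α y - α x ^ 2) * Metric.diam (X : Set E) := by
    intro x hx
    rw [← sum_erase (a := x) _ (by simp), sq (α x), ← mul_sub, ← sum_erase_eq_sub hx, mul_sum,
      sum_mul]
    refine sum_le_sum fun y hy => ?_
    have hy := mem_of_mem_erase hy
    exact mul_le_mul_of_nonneg_left (Metric.dist_le_diam_of_mem X.finite_toSet.isBounded hx hy)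
      (mul_nonneg (hα x hx) (hα y hy))
  calc _ ≤ ∑ x ∈ X, (α x * ∑ y ∈ X, α y - α x ^ 2) * Metric.diam (X : Set E) := sum_le_sum hrow
    _ = _ := by rw [← sum_mul, sum_sub_distrib, ← sum_mul, sq (∑ x ∈ X, α x)]

lemma sq_indicator_Iio_sub (r s u : ℝ) :
    ((Iio r).indicator 1 u - (Iio s).indicator 1 u : ℝ) ^ 2 =
      (Ico (min r s) (max r s)).indicator 1 u := by
  simp only [Set.indicator_apply, Set.mem_Iio, Set.mem_Ico, min_le_iff, lt_max_iff, Pi.one_apply]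
  split_ifs <;> norm_num <;> grind

lemma integrable_sq_indicator_Iio_sub (r s : ℝ) :
    Integrable fun u => ((Iio r).indicator 1 u - (Iio s).indicator 1 u : ℝ) ^ 2 := by
  simp_rw [sq_indicator_Iio_sub]
  exact (integrable_indicator_iff measurableSet_Ico).2 (integrableOn_const (by simp))

lemma integral_sq_indicator_Iio_sub (r s : ℝ) :
    ∫ u, ((Iio r).indicator 1 u - (Iio s).indicator 1 u : ℝ) ^ 2 = |r - s| := by
  simp_rw [sq_indicator_Iio_sub]
  rw [integral_indicator_one measurableSet_Ico]
  simp [max_sub_min_eq_abs']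

lemma two_mul_dist_le_sum_dist_of_periodic {E : Type*} [PseudoMetricSpace E] (f : ℕ → E)
    {m p q : ℕ} (hm : f m = f 0) (hp : p ≤ m) (hq : q ≤ m) :
    2 * dist (f p) (f q) ≤ ∑ j ∈ range m, dist (f j) (f (j + 1)) := by
  wlog hpq : p ≤ q generalizing p q
  · rw [dist_comm]; exact this hq hp (le_of_not_ge hpq)
  have h₁ := dist_le_Ico_sum_dist f hpq
  have h₂ := dist_le_Ico_sum_dist f hq
  have h₃ := dist_le_Ico_sum_dist f (Nat.zero_le p)
  rw [hm] at h₂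
  have := dist_triangle (f q) (f 0) (f p)
  rw [range_eq_Ico, ← sum_Ico_consecutive _ (Nat.zero_le p) hp, ← sum_Ico_consecutive _ hpq hq]
  linarith [dist_comm (f p) (f q), dist_comm (f q) (f 0)]


lemma sum_sum_mul_mul_sub_sq {ι : Type*} (s : Finset ι) (α c : ι → ℝ) :
    ∑ x ∈ s, ∑ y ∈ s, α x * α y * (c x - c y) ^ 2 =
      2 * (∑ x ∈ s, α x) * (∑ x ∈ s, α x * c x ^ 2) - 2 * (∑ x ∈ s, α x * c x) ^ 2 := by
  have (x y : ι) : α x * α y * (c x - c y) ^ 2 =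
      α x * c x ^ 2 * α y + α x * (α y * c y ^ 2) - 2 * (α x * c x) * (α y * c y) := by ring
  simp only [this, sum_sub_distrib, sum_add_distrib, ← mul_sum, ← sum_mul]
  ring

section

variable {ι : Type*} [DecidableEq ι] {X : Finset ι} {α : ι → ℝ} {z : ι}

lemma sum_sum_mul_mul_sq_indicator_sub_le (hsum : ∑ x ∈ X, α x = 1) (hz : z ∈ X)
    (hαz : α z ≤ 0) {t : ι → ℝ} {a b : ℝ} (ht : ∀ y ∈ X.erase z, t y ∈ Icc a b) (u : ℝ) :
    ∑ x ∈ X, ∑ y ∈ X, α x * α y * ((Iio (t x)).indicator 1 u - (Iio (t y)).indicator 1 u) ^ 2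
      ≤ (Ico a b).indicator (fun _ => 1 / 2) u := by
  set c : ι → ℝ := fun x => (Iio (t x)).indicator 1 u
  set S := ∑ x ∈ X, α x * c x
  have hc (x : ι) : c x = if u < t x then 1 else 0 := by simp [c, Set.indicator_apply]
  have hc_sq (x : ι) : c x ^ 2 = c x := by rw [hc]; split_ifs <;> norm_num
  have hQ : ∑ x ∈ X, ∑ y ∈ X, α x * α y * (c x - c y) ^ 2 = 2 * S * (1 - S) := by
    simp only [sum_sum_mul_mul_sub_sq, hc_sq, hsum, S]
    ring
  have hS : S = α z * c z + ∑ y ∈ X.erase z, α y * c y := (add_sum_erase _ _ hz).symm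
  have hcz : 0 ≤ c z ∧ c z ≤ 1 := by rw [hc]; split_ifs <;> norm_num
  change ∑ x ∈ X, ∑ y ∈ X, α x * α y * (c x - c y) ^ 2 ≤ _
  rw [hQ, Set.indicator_apply]
  split_ifs with hu
  · nlinarith [sq_nonneg (2 * S - 1)]
  · rcases not_and_or.1 hu with hau | hbu
    · have h1 : ∀ y ∈ X.erase z, α y * c y = α y := fun y hy => by
        rw [hc, if_pos (by linarith [(ht y hy).1, not_le.1 hau]), mul_one]
      have : 1 ≤ S := by
        rw [hS, sum_congr rfl h1, sum_erase_eq_sub hz, hsum]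
        nlinarith
      nlinarith
    · have h0 : ∀ y ∈ X.erase z, α y * c y = 0 := fun y hy => by
        rw [hc, if_neg (by linarith [(ht y hy).2, not_lt.1 hbu]), mul_zero]
      have : S ≤ 0 := by
        rw [hS, sum_eq_zero h0, add_zero]
        exact mul_nonpos_of_nonpos_of_nonneg hαz hcz.1
      nlinarith

lemma erase_nonempty_of_nonpos (hsum : ∑ x ∈ X, α x = 1) (hz : z ∈ X) (hαz : α z ≤ 0) :
    (X.erase z).Nonempty := by
  rw [Finset.nonempty_iff_ne_empty]
  intro h
  rw [← add_sum_erase _ _ hz, h, sum_empty] at hsum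
  linarith

lemma two_mul_sum_sum_mul_mul_abs_sub_le (hsum : ∑ x ∈ X, α x = 1) (hz : z ∈ X)
    (hαz : α z ≤ 0) {t : ι → ℝ} {a b : ℝ} (ht : ∀ y ∈ X.erase z, t y ∈ Icc a b) :
    2 * ∑ x ∈ X, ∑ y ∈ X, α x * α y * |t x - t y| ≤ b - a := by
  obtain ⟨y, hy⟩ := erase_nonempty_of_nonpos hsum hz hαz
  have hab : a ≤ b := (ht y hy).1.trans (ht y hy).2
  have hint (x y : ι) := integrable_sq_indicator_Iio_sub (t x) (t y)
  have hlayer : ∑ x ∈ X, ∑ y ∈ X, α x * α y * |t x - t y| = ∫ u, ∑ x ∈ X, ∑ y ∈ X,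
      α x * α y * ((Iio (t x)).indicator 1 u - (Iio (t y)).indicator 1 u) ^ 2 := by
    rw [integral_finsetSum _ fun x _ => integrable_finsetSum _ fun y _ => (hint x y).const_mul _]
    refine sum_congr rfl fun x _ => ?_
    rw [integral_finsetSum _ fun y _ => (hint x y).const_mul _]
    simp only [integral_const_mul, integral_sq_indicator_Iio_sub]
  have hle := integral_mono
    (integrable_finsetSum _ fun x _ => integrable_finsetSum _ fun y _ => (hint x y).const_mul _)
    ((integrable_indicator_iff measurableSet_Ico).2 (integrableOn_const (by simp)))
    (sum_sum_mul_mul_sq_indicator_sub_le hsum hz hαz ht)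
  rw [← hlayer, integral_indicator_const _ measurableSet_Ico, measureReal_def, Real.volume_Ico,
    ENNReal.toReal_ofReal (sub_nonneg.2 hab), smul_eq_mul] at hle
  linarith

lemma four_mul_sum_sum_mul_mul_abs_sub_le_sum_cycle (hsum : ∑ x ∈ X, α x = 1) (hz : z ∈ X)
    (hαz : α z ≤ 0) {e : ℕ → ι} {m : ℕ} (hper : e m = e 0)
    (he : ∀ y ∈ X.erase z, ∃ j ≤ m, e j = y) (t : ι → ℝ) :
    4 * ∑ x ∈ X, ∑ y ∈ X, α x * α y * |t x - t y| ≤ ∑ j ∈ range m, |t (e j) - t (e (j + 1))| := by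
  have hY := erase_nonempty_of_nonpos hsum hz hαz
  obtain ⟨ymin, hymin, hmin⟩ := (X.erase z).exists_min_image t hY
  obtain ⟨ymax, hymax, hmax⟩ := (X.erase z).exists_max_image t hY
  obtain ⟨p, hp, rfl⟩ := he ymin hymin
  obtain ⟨q, hq, rfl⟩ := he ymax hymax
  have hrange := two_mul_sum_sum_mul_mul_abs_sub_le hsum hz hαz
    (t := t) fun y hy => ⟨hmin y hy, hmax y hy⟩
  have hcycle := two_mul_dist_le_sum_dist_of_periodic (t ∘ e) (by simp [hper]) hp hq
  simp only [Function.comp_apply, Real.dist_eq] at hcycle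
  linarith [le_abs_self (t (e q) - t (e p)), abs_sub_comm (t (e p)) (t (e q))]

end

lemma four_mul_sum_sum_mul_mul_dist_le {κ : Type*} [Fintype κ]
    {X : Finset (PiLp 1 fun _ : κ => ℝ)} {α : (PiLp 1 fun _ : κ => ℝ) → ℝ}
    {z : PiLp 1 fun _ : κ => ℝ}
    (hsum : ∑ x ∈ X, α x = 1) (hz : z ∈ X) (hαz : α z ≤ 0) :
    4 * ∑ x ∈ X, ∑ y ∈ X, α x * α y * dist x y ≤
      (#X - 1 : ℝ) * Metric.diam (X : Set (PiLp 1 fun _ : κ => ℝ)) := by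
  classical
  set Y := X.erase z
  have hY : 0 < #Y := (erase_nonempty_of_nonpos hsum hz hαz).card_pos
  let e : ℕ → PiLp 1 fun _ : κ => ℝ := fun j => Y.equivFin.symm ⟨j % #Y, Nat.mod_lt _ hY⟩
  have heX (j : ℕ) : e j ∈ X := mem_of_mem_erase (Y.equivFin.symm _).2
  have hper : e #Y = e 0 := by simp [e]
  have he : ∀ y ∈ Y, ∃ j ≤ #Y, e j = y := fun y hy =>
    ⟨Y.equivFin ⟨y, hy⟩, (Fin.is_lt _).le, by simp [e, Nat.mod_eq_of_lt]⟩
  calc 4 * ∑ x ∈ X, ∑ y ∈ X, α x * α y * dist x y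
      = ∑ i, 4 * ∑ x ∈ X, ∑ y ∈ X, α x * α y * |x i - y i| := by
        simp only [PiLp.dist_eq_of_L1, Real.dist_eq, mul_sum]
        exact (sum_congr rfl fun x _ => sum_comm).trans sum_comm
    _ ≤ ∑ i, ∑ j ∈ range #Y, |e j i - e (j + 1) i| := sum_le_sum fun i _ =>
        four_mul_sum_sum_mul_mul_abs_sub_le_sum_cycle hsum hz hαz hper he (fun x => x i)
    _ = ∑ j ∈ range #Y, dist (e j) (e (j + 1)) := by
        rw [sum_comm]; simp [PiLp.dist_eq_of_L1, Real.dist_eq]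
    _ ≤ ∑ j ∈ range #Y, Metric.diam (X : Set (PiLp 1 fun _ : κ => ℝ)) := sum_le_sum fun j _ =>
        Metric.dist_le_diam_of_mem X.finite_toSet.isBounded (heX j) (heX (j + 1))
    _ = _ := by
        rw [sum_const, card_range, nsmul_eq_mul, card_erase_of_mem hz,
          Nat.cast_pred (card_pos.2 ⟨z, hz⟩)]

theorem stmt_8 (n : ℕ) (hn : 2 ≤ n) (X : Finset (PiLp 1 fun _ : Fin n => ℝ))
    (hcard : X.card ≤ 2 * n)
    (α : (PiLp 1 fun _ : Fin n => ℝ) → ℝ)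
    (hsum : ∑ x ∈ X, α x = 1) :
    ∑ x ∈ X, ∑ y ∈ X, α x * α y * ‖x - y‖ ≤
      min ((X.card : ℝ) / 4) ((n : ℝ) / 2 - 1 / 4) *
        Metric.diam (X : Set (PiLp 1 fun _ : Fin n => ℝ)) := by
  classical
  set D := Metric.diam (X : Set (PiLp 1 fun _ : Fin n => ℝ))
  have hD : 0 ≤ D := Metric.diam_nonneg
  have hk : (1 : ℝ) ≤ #X := by
    exact_mod_cast card_pos.2 (nonempty_of_sum_ne_zero (hsum ▸ one_ne_zero))
  have hkn : (#X : ℝ) ≤ 2 * n := by exact_mod_cast hcard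
  have hn' : (2 : ℝ) ≤ n := by exact_mod_cast hn
  simp_rw [← dist_eq_norm]
  by_cases hα : ∀ x ∈ X, 0 ≤ α x
  · have hCS : 1 ≤ #X * ∑ x ∈ X, α x ^ 2 := by
      simpa [hsum] using sq_sum_le_card_mul_sum_sq (s := X) (f := α)
    have hA : 0 ≤ ∑ x ∈ X, α x ^ 2 := sum_nonneg fun x _ => sq_nonneg _
    calc _ ≤ (1 - ∑ x ∈ X, α x ^ 2) * D := by simpa [hsum] using sum_sum_mul_mul_dist_le X hα
      _ ≤ _ := by
        gcongr
        refine le_min ?_ ?_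
        · nlinarith [sq_nonneg ((#X : ℝ) - 2)]
        · nlinarith [mul_le_mul_of_nonneg_right hkn hA, mul_nonneg (sub_nonneg.2 hn') hA]
  · push Not at hα
    obtain ⟨z, hz, hαz⟩ := hα
    have := four_mul_sum_sum_mul_mul_dist_le hsum hz hαz.le
    calc _ ≤ (#X - 1 : ℝ) / 4 * D := by linarith
      _ ≤ _ := by gcongr; exact le_min (by linarith) (by linarith)
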